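/- arXiv:math/0703012 — 3 statements merged into one kernel-verified Lean document; each statement's English description precedes it below -/
import Mathlib

section
/- (Vector-valued Schur estimate) Let 𝒳, 𝒴, 𝒵 be Banach spaces with 𝒴 and 𝒵 of finite cotype. Let α(i,j) > 0 for i,j ∈ ℤ satisfy sup_i ∑_j α(i,j) ≲ 1 and sup_j ∑_i α(i,j) ≲ 1. Let T_{i,j} ∈ ℒ(𝒴, 𝒵) be such that the family {α(i,j)^{−1} T_{i,j} : i,j ∈ ℤ} is R-bounded with R-bound ≲ 1, and let D_i ∈ ℒ(𝒳, 𝒴) satisfy E‖∑_i ε_i D_i x‖_𝒴 ≲ ‖x‖_𝒳 for all x. Then E‖∑_{i,j} ε_j T_{i,j} D_i x‖_𝒵 ≲ ‖x‖_𝒳 for all x ∈ 𝒳. -/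
/-!
Dividing by `A`, the weights `α i j / A` on `I × J` form a doubly substochastic matrix.
Completed by diagonal blocks it becomes doubly stochastic on `I ⊕ J`, hence (Birkhoff–von Neumann)
a convex combination of permutation matrices. A permutation of `I ⊕ J` matches some columns `j` to
pairwise distinct rows `i`, so `∑_{i,j} ε_j T i j (D i x)` is `A` times a convex combination of
random sums `∑_j ε_j (α i_j j)⁻¹ T i_j j (D i_j x)` along partial matchings. The `R`-bound strips
off the operators, and since the rows `i_j` are distinct what remains is a random sum
`∑ ε_i D i x` over a finite set of rows.
-/

noncomputable section

/-- Expectation `E‖∑_{i∈s} ε_i f i‖` over independent random signs indexed by `s`. -/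
def radE {ι X : Type*} [DecidableEq ι] [NormedAddCommGroup X]
    (s : Finset ι) (f : ι → X) : ℝ :=
  ((2 : ℝ) ^ s.card)⁻¹ *
    ∑ σ : {i // i ∈ s} → Bool, ‖∑ i : {i // i ∈ s}, (if σ i then f i.1 else - f i.1)‖

open Finset Matrix

section RadE

variable {ι κ X : Type*} [DecidableEq ι] [DecidableEq κ] [NormedAddCommGroup X]

theorem radE_nonneg (s : Finset ι) (f : ι → X) : 0 ≤ radE s f := by
  unfold radE
  positivity

theorem radE_zero (s : Finset ι) : radE s (fun _ => (0 : X)) = 0 := by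
  simp [radE]

theorem radE_reindex {s : Finset ι} {t : Finset κ} (e : s ≃ t) {f : ι → X} {g : κ → X}
    (hfg : ∀ i : s, f i = g (e i)) : radE s f = radE t g := by
  unfold radE
  rw [← Fintype.card_coe s, ← Fintype.card_coe t, Fintype.card_congr e]
  congr 1
  refine Fintype.sum_equiv (e.arrowCongr (Equiv.refl Bool)) _ _ fun σ => ?_
  congr 1
  refine Fintype.sum_equiv e _ _ fun i => ?_
  simp [hfg i]

theorem radE_congr {s : Finset ι} {f g : ι → X} (h : ∀ i ∈ s, f i = g i) :
    radE s f = radE s g :=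
  radE_reindex (Equiv.refl _) fun i => h i i.2

theorem radE_image {s : Finset κ} {g : κ → ι} (hg : Set.InjOn g s) (f : ι → X) :
    radE (s.image g) f = radE s (fun k => f (g k)) := by
  refine (radE_reindex (Equiv.ofBijective (fun k => ⟨g k, mem_image_of_mem g k.2⟩)
    ⟨fun a b hab => Subtype.ext (hg a.2 b.2 (congrArg Subtype.val hab)), ?_⟩) fun _ => rfl).symm
  rintro ⟨_, hi⟩
  obtain ⟨k, hk, rfl⟩ := mem_image.1 hi
  exact ⟨⟨k, hk⟩, rfl⟩

theorem radE_univ_coe (s : Finset ι) (f : ι → X) :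
    radE (univ : Finset s) (fun i => f i) = radE s f := by
  rw [← radE_image Subtype.val_injective.injOn, univ_eq_attach, attach_image_val]

theorem radE_eq_radE_fin (s : Finset ι) (f : ι → X) :
    radE s f = radE (univ : Finset (Fin s.card)) (fun l => f (s.equivFin.symm l)) :=
  radE_reindex (s.equivFin.trans (Equiv.subtypeUnivEquiv mem_univ).symm) fun i => by simp

theorem radE_smul [NormedSpace ℝ X] (s : Finset ι) (c : ℝ) (f : ι → X) :
    radE s (fun i => c • f i) = |c| * radE s f := by
  unfold radE
  rw [mul_left_comm]
  congr 1
  rw [Finset.mul_sum]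
  refine Finset.sum_congr rfl fun σ _ => ?_
  rw [← Real.norm_eq_abs, ← norm_smul, Finset.smul_sum]
  congr 1
  refine Finset.sum_congr rfl fun i _ => ?_
  split <;> simp

theorem radE_add_le (s : Finset ι) (f g : ι → X) :
    radE s (fun i => f i + g i) ≤ radE s f + radE s g := by
  unfold radE
  rw [← mul_add, ← Finset.sum_add_distrib]
  gcongr with σ
  calc ‖∑ i : s, if σ i then f i + g i else -(f i + g i)‖
      = ‖(∑ i : s, if σ i then f i else -f i) + ∑ i : s, if σ i then g i else -g i‖ := by
        rw [← Finset.sum_add_distrib]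
        congr 1
        refine Finset.sum_congr rfl fun i _ => ?_
        split <;> abel
    _ ≤ _ := norm_add_le _ _

theorem radE_sum_le {α : Type*} (s : Finset ι) (t : Finset α) (F : α → ι → X) :
    radE s (fun i => ∑ a ∈ t, F a i) ≤ ∑ a ∈ t, radE s (F a) := by
  classical
  induction t using Finset.induction_on with
  | empty => simp [radE_zero]
  | insert a t ha ih =>
    simp only [Finset.sum_insert ha]
    exact (radE_add_le _ _ _).trans (by gcongr)

theorem radE_insert_of_eq_zero {s : Finset ι} {a : ι} (ha : a ∉ s) {f : ι → X} (hfa : f a = 0) :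
    radE (insert a s) f = radE s f := by
  set eo := subtypeInsertEquivOption ha
  set signedNorm : (s → Bool) → ℝ := fun τ => ‖∑ i : s, if τ i then f i else -f i‖
  set e := (eo.arrowCongr (Equiv.refl Bool)).trans (Equiv.piOptionEquivProd (β := fun _ => Bool))
  -- a sign configuration on `insert a s` is a sign at `a`, which is irrelevant, and one on `s`
  have hsplit : ∀ σ : {i // i ∈ insert a s} → Bool,
      ‖∑ i : {i // i ∈ insert a s}, if σ i then f i else -f i‖ =
        signedNorm (e σ).2 := by
    intro σ
    rw [← eo.symm.sum_comp, Fintype.sum_option]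
    have : (eo.symm none).1 = a := rfl
    simp only [this, hfa, neg_zero, ite_self, zero_add]
    rfl
  unfold radE
  rw [card_insert_of_notMem ha, pow_succ, mul_inv, mul_assoc,
    Finset.sum_congr rfl fun σ _ => hsplit σ,
    Fintype.sum_equiv e _ (fun p => signedNorm p.2) fun σ => rfl,
    Fintype.sum_prod_type, Fintype.sum_bool]
  ring

theorem radE_union_of_eq_zero (s d : Finset ι) {f : ι → X} (hd : ∀ i ∈ d, f i = 0) :
    radE (s ∪ d) f = radE s f := by
  induction d using Finset.induction_on with
  | empty => rw [union_empty]
  | insert a d ha ih =>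
    have ih := ih fun i hi => hd i (mem_insert_of_mem hi)
    rw [union_insert]
    by_cases has : a ∈ s ∪ d
    · rw [insert_eq_of_mem has, ih]
    · rw [radE_insert_of_eq_zero has (hd a (mem_insert_self a d)), ih]

theorem radE_filter_of_eq_zero (s : Finset ι) (p : ι → Prop) [DecidablePred p] {f : ι → X}
    (hf : ∀ i ∈ s, ¬ p i → f i = 0) : radE (s.filter p) f = radE s f := by
  conv_rhs => rw [← filter_union_filter_not_eq p s]
  refine (radE_union_of_eq_zero _ _ fun i hi => ?_).symm
  rw [mem_filter] at hi
  exact hf i hi.1 hi.2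

end RadE

section Birkhoff

variable {m n : Type*} [Fintype m] [Fintype n] [DecidableEq m] [DecidableEq n]

theorem fromBlocks_mem_doublyStochastic (B : Matrix m n ℝ) (hB : ∀ i j, 0 ≤ B i j)
    (hrow : ∀ i, ∑ j, B i j ≤ 1) (hcol : ∀ j, ∑ i, B i j ≤ 1) :
    fromBlocks (diagonal fun i => 1 - ∑ j, B i j) B Bᵀ (diagonal fun j => 1 - ∑ i, B i j) ∈
      doublyStochastic ℝ (m ⊕ n) := by
  refine mem_doublyStochastic_iff_sum.2 ⟨?_, ?_, ?_⟩
  · rintro (i | j) (i' | j') <;>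
      simp [diagonal_apply, apply_ite, hB, hrow, hcol, sub_nonneg]
  · rintro (i | j) <;> simp [Fintype.sum_sum_type, diagonal_apply]
  · rintro (i | j) <;> simp [Fintype.sum_sum_type, diagonal_apply]

theorem exists_sum_perm_eq_of_substochastic (B : Matrix m n ℝ) (hB : ∀ i j, 0 ≤ B i j)
    (hrow : ∀ i, ∑ j, B i j ≤ 1) (hcol : ∀ j, ∑ i, B i j ≤ 1) :
    ∃ wt : Equiv.Perm (m ⊕ n) → ℝ, (∀ σ, 0 ≤ wt σ) ∧ ∑ σ, wt σ = 1 ∧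
      ∀ i j, ∑ σ, (if σ (.inl i) = .inr j then wt σ else 0) = B i j := by
  obtain ⟨wt, hwt0, hwt1, hM⟩ :=
    exists_eq_sum_perm_of_mem_doublyStochastic (fromBlocks_mem_doublyStochastic B hB hrow hcol)
  refine ⟨wt, hwt0, hwt1, fun i j => ?_⟩
  have := congr_fun₂ hM (.inl i) (.inr j)
  simpa [Matrix.sum_apply, Equiv.Perm.permMatrix, PEquiv.toMatrix_apply] using this

end Birkhoff

def matchedRow {m n : Type*} (σ : Equiv.Perm (m ⊕ n)) (j : n) : Option m :=
  (σ.symm (.inr j)).getLeft?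

theorem matchedRow_eq_some_iff {m n : Type*} {σ : Equiv.Perm (m ⊕ n)} {i : m} {j : n} :
    matchedRow σ j = some i ↔ σ (.inl i) = .inr j := by
  rw [matchedRow, Sum.getLeft?_eq_some_iff, Equiv.symm_apply_eq, eq_comm]

theorem matchedRow_injective {m n : Type*} (σ : Equiv.Perm (m ⊕ n)) {j₁ j₂ : n} {i : m}
    (h₁ : matchedRow σ j₁ = some i) (h₂ : matchedRow σ j₂ = some i) : j₁ = j₂ := by
  rw [matchedRow_eq_some_iff] at h₁ h₂
  exact Sum.inr_injective (h₁.symm.trans h₂)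

theorem Option.elim_zero_eq_sum_ite {m Z : Type*} [Fintype m] [DecidableEq m] [AddCommMonoid Z]
    (o : Option m) (F : m → Z) : o.elim 0 F = ∑ i, if o = some i then F i else 0 := by
  cases o <;> simp

theorem sum_smul_eq_sum_perm_smul_matchedRow {m n Z : Type*} [Fintype m] [Fintype n]
    [DecidableEq m] [DecidableEq n] [AddCommGroup Z] [Module ℝ Z] {B : Matrix m n ℝ}
    {wt : Equiv.Perm (m ⊕ n) → ℝ}
    (hwt : ∀ i j, ∑ σ, (if σ (.inl i) = .inr j then wt σ else 0) = B i j) (j : n) (F : m → Z) :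
    ∑ i, B i j • F i = ∑ σ, wt σ • (matchedRow σ j).elim 0 F := by
  simp_rw [Option.elim_zero_eq_sum_ite, matchedRow_eq_some_iff, Finset.smul_sum, smul_ite,
    smul_zero]
  rw [Finset.sum_comm]
  refine Finset.sum_congr rfl fun i _ => ?_
  rw [← hwt i j, Finset.sum_smul]
  exact Finset.sum_congr rfl fun σ _ => by split_ifs <;> simp

section RBounded

variable {ι κ Y Z : Type*} [NormedAddCommGroup Y] [NormedSpace ℝ Y]
  [NormedAddCommGroup Z] [NormedSpace ℝ Z]

def RBoundedWith (C : ℝ) (S : ι → Y →L[ℝ] Z) : Prop :=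
  ∀ (N : ℕ) (idx : Fin N → ι) (y : Fin N → Y),
    radE univ (fun j => S (idx j) (y j)) ≤ C * radE univ y

theorem RBoundedWith.mono {C C' : ℝ} {S : ι → Y →L[ℝ] Z} (hS : RBoundedWith C S) (hC : C ≤ C') :
    RBoundedWith C' S := fun N idx y =>
  (hS N idx y).trans (mul_le_mul_of_nonneg_right hC (radE_nonneg _ _))

theorem RBoundedWith.comp {C : ℝ} {S : ι → Y →L[ℝ] Z} (hS : RBoundedWith C S) (g : κ → ι) :
    RBoundedWith C (fun k => S (g k)) := fun N idx y => hS N (fun j => g (idx j)) y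

theorem RBoundedWith.radE_le [DecidableEq κ] {C : ℝ} {S : ι → Y →L[ℝ] Z} (hS : RBoundedWith C S)
    (s : Finset κ) (idx : κ → ι) (y : κ → Y) :
    radE s (fun k => S (idx k) (y k)) ≤ C * radE s y := by
  rw [radE_eq_radE_fin s, radE_eq_radE_fin s y]
  exact hS _ _ _

end RBounded

section Schur

variable {m n Y Z : Type*} [DecidableEq m] [DecidableEq n]
  [NormedAddCommGroup Y] [NormedSpace ℝ Y] [NormedAddCommGroup Z] [NormedSpace ℝ Z]
  {S : m → n → Y →L[ℝ] Z} {C K : ℝ} {w : m → Y}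

theorem radE_elim_le_of_partialInjective (hS : RBoundedWith C fun q : m × n => S q.1 q.2)
    (hC : 0 ≤ C) (hw : ∀ t : Finset m, radE t w ≤ K) (p : n → Option m)
    (hp : ∀ {j₁ j₂ i}, p j₁ = some i → p j₂ = some i → j₁ = j₂) (s : Finset n) :
    radE s (fun j => (p j).elim 0 fun i => S i j (w i)) ≤ C * K := by
  rcases isEmpty_or_nonempty m with hm | ⟨⟨i₀⟩⟩
  · have hK : 0 ≤ K := (radE_nonneg _ _).trans (hw ∅)
    rw [radE_congr (g := fun _ => 0) fun j _ => by rw [Subsingleton.elim (p j) none]; rfl,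
      radE_zero]
    positivity
  set matched := s.filter fun j => (p j).isSome
  set g : n → m := fun j => (p j).getD i₀
  have hpg : ∀ j ∈ matched, p j = some (g j) := fun j hj => by
    obtain ⟨i, hi⟩ := Option.isSome_iff_exists.1 (mem_filter.1 hj).2
    simp [g, hi]
  have hg : Set.InjOn g matched := fun j₁ h₁ j₂ h₂ h =>
    hp (hpg j₁ h₁) ((hpg j₂ h₂).trans (congrArg some h.symm))
  calc radE s (fun j => (p j).elim 0 fun i => S i j (w i))
      = radE matched (fun j => (p j).elim 0 fun i => S i j (w i)) := by
        refine (radE_filter_of_eq_zero s _ fun j _ hj => ?_).symm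
        rw [Option.not_isSome_iff_eq_none.1 hj, Option.elim_none]
    _ = radE matched (fun j => S (g j) j (w (g j))) :=
        radE_congr fun j hj => by rw [hpg j hj, Option.elim_some]
    _ ≤ C * radE matched (fun j => w (g j)) := hS.radE_le matched (fun j => (g j, j)) _
    _ = C * radE (matched.image g) w := by rw [radE_image hg]
    _ ≤ C * K := by gcongr; exact hw _

theorem radE_sum_smul_le_of_substochastic [Fintype m] [Fintype n] (B : Matrix m n ℝ)
    (hB : ∀ i j, 0 ≤ B i j) (hrow : ∀ i, ∑ j, B i j ≤ 1) (hcol : ∀ j, ∑ i, B i j ≤ 1)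
    (hS : RBoundedWith C fun q : m × n => S q.1 q.2) (hC : 0 ≤ C)
    (hw : ∀ t : Finset m, radE t w ≤ K) :
    radE univ (fun j => ∑ i, B i j • S i j (w i)) ≤ C * K := by
  obtain ⟨wt, hwt0, hwt1, hwt⟩ := exists_sum_perm_eq_of_substochastic B hB hrow hcol
  set G : Equiv.Perm (m ⊕ n) → n → Z := fun σ j => (matchedRow σ j).elim 0 fun i => S i j (w i)
  calc radE univ (fun j => ∑ i, B i j • S i j (w i))
      = radE univ (fun j => ∑ σ, wt σ • G σ j) :=
        radE_congr fun j _ => sum_smul_eq_sum_perm_smul_matchedRow hwt j _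
    _ ≤ ∑ σ, radE univ (fun j => wt σ • G σ j) := radE_sum_le _ _ _
    _ ≤ ∑ σ, wt σ * (C * K) := by
        refine sum_le_sum fun σ _ => ?_
        rw [radE_smul, abs_of_nonneg (hwt0 σ)]
        exact mul_le_mul_of_nonneg_left
          (radE_elim_le_of_partialInjective hS hC hw _ (matchedRow_injective σ) _) (hwt0 σ)
    _ = C * K := by rw [← sum_mul, hwt1, one_mul]

theorem radE_sum_apply_le_of_schur [Fintype m] [Fintype n] {T : m → n → Y →L[ℝ] Z}
    {α : m → n → ℝ} {A : ℝ} (hα : ∀ i j, 0 < α i j) (hA : 0 < A)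
    (hrow : ∀ i, ∑ j, α i j ≤ A) (hcol : ∀ j, ∑ i, α i j ≤ A)
    (hT : RBoundedWith C fun q : m × n => (α q.1 q.2)⁻¹ • T q.1 q.2) (hC : 0 ≤ C)
    (hw : ∀ t : Finset m, radE t w ≤ K) :
    radE univ (fun j => ∑ i, T i j (w i)) ≤ A * (C * K) := by
  have hterm (i : m) (j : n) :
      T i j (w i) = A • ((α i j / A) • ((α i j)⁻¹ • T i j) (w i)) := by
    rw [smul_smul, mul_div_cancel₀ _ hA.ne', _root_.smul_apply, smul_inv_smul₀ (hα i j).ne']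
  calc radE univ (fun j => ∑ i, T i j (w i))
      = radE univ (fun j => A • ∑ i, (α i j / A) • ((α i j)⁻¹ • T i j) (w i)) :=
        radE_congr fun j _ => by simp_rw [smul_sum, ← hterm]
    _ = A * radE univ (fun j => ∑ i, (α i j / A) • ((α i j)⁻¹ • T i j) (w i)) := by
        rw [radE_smul, abs_of_pos hA]
    _ ≤ A * (C * K) := by
        gcongr
        refine radE_sum_smul_le_of_substochastic _ (fun i j => (div_pos (hα i j) hA).le)
          (fun i => ?_) (fun j => ?_) hT hC hw <;> rw [← sum_div, div_le_one hA]
        exacts [hrow i, hcol j]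

end Schur

theorem vector_valued_schur_estimate_general
    {𝒳 𝒴 𝒵 : Type*} [NormedAddCommGroup 𝒳] [NormedSpace ℝ 𝒳]
    [NormedAddCommGroup 𝒴] [NormedSpace ℝ 𝒴]
    [NormedAddCommGroup 𝒵] [NormedSpace ℝ 𝒵]
    (α : ℤ → ℤ → ℝ) (hαpos : ∀ i j, 0 < α i j)
    (A : ℝ) (hα₁ : ∀ i, ∀ J : Finset ℤ, ∑ j ∈ J, α i j ≤ A)
    (hα₂ : ∀ j, ∀ I : Finset ℤ, ∑ i ∈ I, α i j ≤ A)
    (T : ℤ → ℤ → 𝒴 →L[ℝ] 𝒵)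
    (CR : ℝ) (hR : ∀ (N : ℕ) (idx : Fin N → ℤ × ℤ) (y : Fin N → 𝒴),
      radE Finset.univ (fun j => (α (idx j).1 (idx j).2)⁻¹ • T (idx j).1 (idx j).2 (y j))
        ≤ CR * radE Finset.univ y)
    (D : ℤ → 𝒳 →L[ℝ] 𝒴)
    (CD : ℝ) (hD : ∀ (I : Finset ℤ) (x : 𝒳), radE I (fun i => D i x) ≤ CD * ‖x‖) :
    ∃ C : ℝ, 0 < C ∧ ∀ (I J : Finset ℤ) (x : 𝒳),
      radE J (fun j => ∑ i ∈ I, T i j (D i x)) ≤ C * ‖x‖ := by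
  have hA : 0 < A := (hαpos 0 0).trans_le (by simpa using hα₁ 0 {0})
  have hRmax : RBoundedWith (max CR 0) fun q : ℤ × ℤ => (α q.1 q.2)⁻¹ • T q.1 q.2 :=
    RBoundedWith.mono hR (le_max_left _ _)
  refine ⟨A * max CR 0 * max CD 0 + 1, by positivity, fun I J x => ?_⟩
  have hschur := radE_sum_apply_le_of_schur (m := I) (n := J) (T := fun i j => T i j)
    (w := fun i => D i x) (K := max CD 0 * ‖x‖) (fun i j => hαpos i j) hA
    (fun i => (sum_coe_sort J _).trans_le (hα₁ i J))
    (fun j => (sum_coe_sort I _).trans_le (hα₂ j I))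
    (hRmax.comp fun q : I × J => (q.1.1, q.2.1)) (le_max_right _ _) fun t => by
      rw [← radE_image (f := fun i => D i x) Subtype.val_injective.injOn]
      exact (hD _ x).trans (by gcongr; exact le_max_left _ _)
  calc radE J (fun j => ∑ i ∈ I, T i j (D i x))
      = radE univ (fun j : J => ∑ i : I, T i j (D i x)) := by
        rw [← radE_univ_coe J]
        exact radE_congr fun j _ => (sum_coe_sort I fun i => T i j (D i x)).symm
    _ ≤ A * (max CR 0 * (max CD 0 * ‖x‖)) := hschur
    _ ≤ (A * max CR 0 * max CD 0 + 1) * ‖x‖ := by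
        rw [← mul_assoc, ← mul_assoc]
        exact mul_le_mul_of_nonneg_right (le_add_of_nonneg_right zero_le_one) (norm_nonneg x)

/-- Vector-valued Schur estimate: with `𝒴, 𝒵` of finite cotype, Schur-summable weights
`α(i,j)`, an `R`-bounded family `{α(i,j)⁻¹ T_{i,j}}` and operators `D_i` satisfying a
randomized bound `E‖∑ ε_i D_i x‖ ≲ ‖x‖`, one has `E‖∑_{i,j} ε_j T_{i,j} D_i x‖ ≲ ‖x‖`. -/
theorem vector_valued_schur_estimate
    {𝒳 𝒴 𝒵 : Type*} [NormedAddCommGroup 𝒳] [NormedSpace ℝ 𝒳]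
    [NormedAddCommGroup 𝒴] [NormedSpace ℝ 𝒴]
    [NormedAddCommGroup 𝒵] [NormedSpace ℝ 𝒵]
    -- 𝒴 and 𝒵 have finite cotype
    (hcoY : ∃ (s C : ℝ), 2 ≤ s ∧ 0 < C ∧ ∀ (N : ℕ) (y : Fin N → 𝒴),
      (∑ j, ‖y j‖ ^ s) ^ (1 / s) ≤ C * radE Finset.univ y)
    (hcoZ : ∃ (s C : ℝ), 2 ≤ s ∧ 0 < C ∧ ∀ (N : ℕ) (z : Fin N → 𝒵),
      (∑ j, ‖z j‖ ^ s) ^ (1 / s) ≤ C * radE Finset.univ z)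
    (α : ℤ → ℤ → ℝ) (hαpos : ∀ i j, 0 < α i j)
    (A : ℝ) (hα₁ : ∀ i, ∀ J : Finset ℤ, ∑ j ∈ J, α i j ≤ A)
    (hα₂ : ∀ j, ∀ I : Finset ℤ, ∑ i ∈ I, α i j ≤ A)
    (T : ℤ → ℤ → 𝒴 →L[ℝ] 𝒵)
    (CR : ℝ) (hR : ∀ (N : ℕ) (idx : Fin N → ℤ × ℤ) (y : Fin N → 𝒴),
      radE Finset.univ (fun j => (α (idx j).1 (idx j).2)⁻¹ • T (idx j).1 (idx j).2 (y j))
        ≤ CR * radE Finset.univ y)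
    (D : ℤ → 𝒳 →L[ℝ] 𝒴)
    (CD : ℝ) (hD : ∀ (I : Finset ℤ) (x : 𝒳), radE I (fun i => D i x) ≤ CD * ‖x‖) :
    ∃ C : ℝ, 0 < C ∧ ∀ (I J : Finset ℤ) (x : 𝒳),
      radE J (fun j => ∑ i ∈ I, T i j (D i x)) ≤ C * ‖x‖ :=
  vector_valued_schur_estimate_general α hαpos A hα₁ hα₂ T CR hR D CD hD
end
end

section
/- (Abstract Hodge decomposition) Let Y be a reflexive Banach space and A a bisectorial operator in Y. Then Y decomposes as the topological direct sum Y = ker(A) ⊕ closure(range(A)), and the projection onto closure(range(A)) along ker(A) is given by P u = lim_{t → ∞} t²A²(I + t²A²)^{−1} u. -/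
/-! `P t = (1 + t²A²)⁻¹` factors as `(1 + itA)⁻¹ (1 - itA)⁻¹`, so it is uniformly bounded, fixes
`ker A`, and `‖A P t‖ = O(1/t)`. Since `P t` commutes with `A`, it tends to `0` on `range A`, and by
equicontinuity on its closure `N`. By reflexivity, `P t u` has a weak limit point `x` as `t → ∞`
(Banach–Alaoglu in the bidual). It lies in `ker A` because `(1 - R 1) (P t u) = R 1 (i A P t u)`
tends to `0` in norm, and `u - x ∈ N` because `u - P t u = A (t² A P t u)` and closed subspaces are
weakly closed. Hence `Y = ker A ⊕ N`, and `t²A² P t u = u - P t u` converges to the `N`-component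
of `u`, with norm at most `(1 + C²) ‖u‖`. -/

open Filter Topology

section WeakTopology

variable {𝕜 X : Type*} [RCLike 𝕜] [NormedAddCommGroup X] [NormedSpace 𝕜 X] {ι : Type*}

theorem exists_ultrafilter_tendsto_toWeakSpace
    (hrefl : Function.Surjective (NormedSpace.inclusionInDoubleDual 𝕜 X))
    (l : Filter ι) [l.NeBot] {f : ι → X} (hf : Bornology.IsBounded (Set.range f)) :
    ∃ U : Ultrafilter ι, ↑U ≤ l ∧ ∃ x : X,
      Tendsto (fun i ↦ toWeakSpace 𝕜 X (f i)) U (𝓝 (toWeakSpace 𝕜 X x)) := by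
  set S := toWeakSpace 𝕜 X '' Set.range f
  have hS : IsCompact (closure S) := by
    refine NormedSpace.isCompact_closure_of_isBounded 𝕜 X S ?_ fun y _ ↦ ?_
    · rwa [Set.preimage_image_eq _ (toWeakSpace 𝕜 X).injective]
    · obtain ⟨x, hx⟩ := hrefl (WeakDual.toStrongDual y)
      refine ⟨toWeakSpace 𝕜 X x, WeakDual.toStrongDual.injective ?_⟩
      rw [← hx]
      rfl
  let U := Ultrafilter.of l
  obtain ⟨y, -, hy⟩ := hS.ultrafilter_le_nhds (U.map (fun i ↦ toWeakSpace 𝕜 X (f i)))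
    (le_principal_iff.mpr (mem_map.mpr (univ_mem' fun i ↦ subset_closure ⟨f i, ⟨i, rfl⟩, rfl⟩)))
  exact ⟨U, Ultrafilter.of_le l, (toWeakSpace 𝕜 X).symm y, by rwa [LinearEquiv.apply_symm_apply]⟩

theorem Submodule.mem_of_tendsto_toWeakSpace {M : Submodule 𝕜 X} (hM : IsClosed (M : Set X))
    {l : Filter ι} [l.NeBot] {f : ι → X} {x : X}
    (hfx : Tendsto (fun i ↦ toWeakSpace 𝕜 X (f i)) l (𝓝 (toWeakSpace 𝕜 X x)))
    (hf : ∀ᶠ i in l, f i ∈ M) : x ∈ M := by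
  let := NormedSpace.restrictScalars ℝ 𝕜 X
  have hconv : Convex ℝ (M : Set X) := (M.restrictScalars ℝ).convex
  have hMw : IsClosed (toWeakSpace 𝕜 X '' M) := by
    rw [← closure_eq_iff_isClosed, ← hconv.toWeakSpace_closure 𝕜, hM.closure_eq]
  simpa using hMw.mem_of_tendsto hfx (hf.mono fun i hi ↦ ⟨f i, hi, rfl⟩)

theorem eq_of_tendsto_toWeakSpace_of_tendsto {l : Filter ι} [l.NeBot] {f : ι → X} {x y : X}
    (hfx : Tendsto (fun i ↦ toWeakSpace 𝕜 X (f i)) l (𝓝 (toWeakSpace 𝕜 X x)))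
    (hfy : Tendsto f l (𝓝 y)) : x = y :=
  (toWeakSpace 𝕜 X).injective <|
    tendsto_nhds_unique hfx (((toWeakSpaceCLM 𝕜 X).continuous.tendsto y).comp hfy)

end WeakTopology

section Resolvent

variable {Y : Type*} [NormedAddCommGroup Y] [NormedSpace ℂ Y] {A : Y →ₗ[ℂ] Y}
  {R P : ℝ → Y →L[ℂ] Y} {C : ℝ}

theorem eq_resolvent_comp_resolvent_neg
    (hRA : ∀ (t : ℝ) (x : Y), R t x + (Complex.I * (t : ℂ)) • A (R t x) = x)
    (hAP : ∀ (t : ℝ) (x : Y), P t (x + ((t : ℂ) ^ 2) • A (A x)) = x) (t : ℝ) :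
    P t = R t ∘L R (-t) := by
  ext x
  rw [ContinuousLinearMap.comp_apply]
  have hz := hRA (-t) x
  generalize R (-t) x = z at hz ⊢
  have hy := hRA t z
  generalize R t z = y at hy ⊢
  subst hy hz
  convert hAP t y using 2
  simp only [map_add, map_smul]
  push_cast
  match_scalars <;> ring_nf
  simp [Complex.I_sq]

theorem norm_le_mul_self_of_eq_resolvent_comp
    (hPR : ∀ t, P t = R t ∘L R (-t)) (hR : ∀ t, ‖R t‖ ≤ C) (t : ℝ) : ‖P t‖ ≤ C * C := by
  rw [hPR]
  exact (ContinuousLinearMap.opNorm_comp_le _ _).trans <|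
    mul_le_mul (hR t) (hR (-t)) (norm_nonneg _) ((norm_nonneg _).trans (hR t))

theorem abs_mul_norm_map_resolvent_le
    (hRA : ∀ (t : ℝ) (x : Y), R t x + (Complex.I * (t : ℂ)) • A (R t x) = x)
    {t : ℝ} (hR : ‖R t‖ ≤ C) (y : Y) : |t| * ‖A (R t y)‖ ≤ (1 + C) * ‖y‖ := by
  have hsmul : (Complex.I * (t : ℂ)) • A (R t y) = y - R t y := eq_sub_of_add_eq' (hRA t y)
  calc |t| * ‖A (R t y)‖ = ‖y - R t y‖ := by simp [← hsmul, norm_smul]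
    _ ≤ ‖y‖ + C * ‖y‖ := (norm_sub_le _ _).trans (by gcongr; exact (R t).le_of_opNorm_le hR y)
    _ = (1 + C) * ‖y‖ := by ring

theorem tendsto_map_resolvent_comp_atTop_zero
    (hRA : ∀ (t : ℝ) (x : Y), R t x + (Complex.I * (t : ℂ)) • A (R t x) = x)
    (hR : ∀ t, ‖R t‖ ≤ C) (x : Y) :
    Tendsto (fun t : ℝ ↦ A (R t (R (-t) x))) atTop (𝓝 0) := by
  have hK : Tendsto (fun t : ℝ ↦ (1 + C) * (C * ‖x‖) * t⁻¹) atTop (𝓝 0) := by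
    simpa using tendsto_inv_atTop_zero.const_mul ((1 + C) * (C * ‖x‖))
  refine squeeze_zero_norm' ?_ hK
  filter_upwards [eventually_gt_atTop 0] with t ht
  rw [le_mul_inv_iff₀ ht, mul_comm]
  calc t * ‖A (R t (R (-t) x))‖ = |t| * ‖A (R t (R (-t) x))‖ := by rw [abs_of_pos ht]
    _ ≤ (1 + C) * ‖R (-t) x‖ := abs_mul_norm_map_resolvent_le hRA (hR t) _
    _ ≤ (1 + C) * (C * ‖x‖) := by
      have hC : 0 ≤ 1 + C := by linarith [(norm_nonneg _).trans (hR 0)]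
      gcongr
      exact (R (-t)).le_of_opNorm_le (hR (-t)) x

theorem apply_map_eq_map_apply
    (hPA : ∀ (t : ℝ) (x : Y), P t x + ((t : ℂ) ^ 2) • A (A (P t x)) = x)
    (hAP : ∀ (t : ℝ) (x : Y), P t (x + ((t : ℂ) ^ 2) • A (A x)) = x) (t : ℝ) (x : Y) :
    P t (A x) = A (P t x) := by
  conv_lhs => rw [← hPA t x, map_add, map_smul, hAP]

theorem apply_eq_self_of_mem_ker
    (hAP : ∀ (t : ℝ) (x : Y), P t (x + ((t : ℂ) ^ 2) • A (A x)) = x) {x : Y}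
    (hx : x ∈ LinearMap.ker A) (t : ℝ) : P t x = x := by
  simpa [LinearMap.mem_ker.mp hx] using hAP t x

theorem tendsto_atTop_zero_of_mem_closure_range
    (hPA : ∀ (t : ℝ) (x : Y), P t x + ((t : ℂ) ^ 2) • A (A (P t x)) = x)
    (hAP : ∀ (t : ℝ) (x : Y), P t (x + ((t : ℂ) ^ 2) • A (A x)) = x)
    (hP : ∀ t, ‖P t‖ ≤ C) (hAP0 : ∀ x, Tendsto (fun t : ℝ ↦ A (P t x)) atTop (𝓝 0))
    {v : Y} (hv : v ∈ (LinearMap.range A).topologicalClosure) :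
    Tendsto (fun t : ℝ ↦ P t v) atTop (𝓝 0) := by
  have hequi : Equicontinuous ((↑) ∘ P : ℝ → Y → Y) :=
    ((NormedSpace.equicontinuous_TFAE P).out 5 1).mp (show ∃ C, ∀ t, ‖P t‖ ≤ C from ⟨C, hP⟩)
  refine closure_minimal ?_ (hequi.isClosed_setOfPred_tendsto continuous_const) hv
  rintro _ ⟨w, rfl⟩
  show Tendsto (fun t ↦ P t (A w)) atTop (𝓝 0)
  simpa only [apply_map_eq_map_apply hPA hAP] using hAP0 w

theorem exists_mem_ker_sub_mem_closure_range
    (hrefl : Function.Surjective (NormedSpace.inclusionInDoubleDual ℂ Y))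
    (hRA : ∀ (t : ℝ) (x : Y), R t x + (Complex.I * (t : ℂ)) • A (R t x) = x)
    (hAR : ∀ (t : ℝ) (x : Y), R t (x + (Complex.I * (t : ℂ)) • A x) = x)
    (hPA : ∀ (t : ℝ) (x : Y), P t x + ((t : ℂ) ^ 2) • A (A (P t x)) = x)
    (hP : ∀ t, ‖P t‖ ≤ C) (hAP0 : ∀ x, Tendsto (fun t : ℝ ↦ A (P t x)) atTop (𝓝 0)) (u : Y) :
    ∃ x ∈ LinearMap.ker A, u - x ∈ (LinearMap.range A).topologicalClosure := by
  have hbdd : Bornology.IsBounded (Set.range fun t ↦ P t u) :=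
    isBounded_iff_forall_norm_le.mpr
      ⟨C * ‖u‖, Set.forall_mem_range.mpr fun t ↦ (P t).le_of_opNorm_le (hP t) u⟩
  obtain ⟨U, hU, x, hx⟩ := exists_ultrafilter_tendsto_toWeakSpace hrefl atTop hbdd
  refine ⟨x, ?_, ?_⟩
  · set T := ContinuousLinearMap.id ℂ Y - R 1
    have hT : ∀ y, T y = R 1 ((Complex.I * ((1 : ℝ) : ℂ)) • A y) := fun y ↦
      (eq_sub_of_add_eq' (show R 1 y + R 1 ((Complex.I * ((1 : ℝ) : ℂ)) • A y) = y by
        rw [← map_add, hAR])).symm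
    have hweak : Tendsto (fun t ↦ toWeakSpace ℂ Y (T (P t u))) U (𝓝 (toWeakSpace ℂ Y (T x))) :=
      ((WeakSpace.map T).continuous.tendsto _).comp hx
    have hnorm : Tendsto (fun t ↦ T (P t u)) U (𝓝 0) := by
      have hAPu := ((hAP0 u).const_smul (Complex.I * ((1 : ℝ) : ℂ))).mono_left hU
      simpa only [hT, smul_zero, map_zero, Function.comp_def] using
        ((R 1).continuous.tendsto _).comp hAPu
    have hRx : R 1 x = x :=
      (sub_eq_zero.mp (eq_of_tendsto_toWeakSpace_of_tendsto hweak hnorm)).symm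
    simpa [hRx] using hRA 1 x
  · refine Submodule.mem_of_tendsto_toWeakSpace (Submodule.isClosed_topologicalClosure _)
      (f := fun t ↦ u - P t u) (by simpa only [map_sub] using tendsto_const_nhds.sub hx)
      (Eventually.of_forall fun t ↦ Submodule.le_topologicalClosure _ ?_)
    exact ⟨((t : ℂ) ^ 2) • A (P t u), by rw [map_smul]; exact eq_sub_of_add_eq' (hPA t u)⟩

theorem isCompl_ker_closure_range
    (hAP : ∀ (t : ℝ) (x : Y), P t (x + ((t : ℂ) ^ 2) • A (A x)) = x)
    (hPN : ∀ v ∈ (LinearMap.range A).topologicalClosure, Tendsto (fun t : ℝ ↦ P t v) atTop (𝓝 0))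
    (hsplit : ∀ u, ∃ x ∈ LinearMap.ker A, u - x ∈ (LinearMap.range A).topologicalClosure) :
    IsCompl (LinearMap.ker A) (LinearMap.range A).topologicalClosure := by
  refine ⟨Submodule.disjoint_def.mpr fun v hker hN ↦ ?_, codisjoint_iff_le_sup.mpr fun u _ ↦ ?_⟩
  · simpa [apply_eq_self_of_mem_ker hAP hker] using hPN v hN
  · obtain ⟨x, hx, hux⟩ := hsplit u
    exact Submodule.mem_sup.mpr ⟨x, hx, u - x, hux, add_sub_cancel x u⟩

theorem tendsto_sub_apply_projection
    (hAP : ∀ (t : ℝ) (x : Y), P t (x + ((t : ℂ) ^ 2) • A (A x)) = x)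
    (hPN : ∀ v ∈ (LinearMap.range A).topologicalClosure, Tendsto (fun t : ℝ ↦ P t v) atTop (𝓝 0))
    (h : IsCompl (LinearMap.range A).topologicalClosure (LinearMap.ker A)) (u : Y) :
    Tendsto (fun t : ℝ ↦ u - P t u) atTop
      (𝓝 ((LinearMap.range A).topologicalClosure.projection (LinearMap.ker A) h u)) := by
  set p := (LinearMap.range A).topologicalClosure.projection (LinearMap.ker A) h u
  have hP : ∀ t, u - P t u = p - P t p := fun t ↦ by
    rw [← add_sub_cancel p u, map_add,
      apply_eq_self_of_mem_ker hAP (Submodule.sub_projection_mem h u)]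
    abel
  simpa only [hP, sub_zero] using
    tendsto_const_nhds.sub (hPN p (Submodule.projection_apply_mem h u))

end Resolvent

theorem abstract_hodge_decomposition_general
    {Y : Type*} [NormedAddCommGroup Y] [NormedSpace ℂ Y]
    -- reflexivity
    (hrefl : Function.Surjective (NormedSpace.inclusionInDoubleDual ℂ Y))
    (A : Y →ₗ[ℂ] Y)
    -- bisectoriality: uniformly bounded resolvents on the imaginary axis
    (R : ℝ → (Y →L[ℂ] Y)) (C : ℝ) (hRbdd : ∀ t : ℝ, ‖R t‖ ≤ C)
    (hRA : ∀ (t : ℝ) (x : Y), R t x + (Complex.I * (t : ℂ)) • A (R t x) = x)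
    (hAR : ∀ (t : ℝ) (x : Y), R t (x + (Complex.I * (t : ℂ)) • A x) = x)
    (P : ℝ → (Y →L[ℂ] Y))
    (hPA : ∀ (t : ℝ) (x : Y), P t x + ((t : ℂ) ^ 2) • A (A (P t x)) = x)
    (hAP : ∀ (t : ℝ) (x : Y), P t (x + ((t : ℂ) ^ 2) • A (A x)) = x) :
    IsCompl (LinearMap.ker A) ((LinearMap.range A).topologicalClosure) ∧
    ∃ Pr : Y →L[ℂ] Y,
      (∀ x, Pr (Pr x) = Pr x) ∧
      LinearMap.ker (Pr : Y →ₗ[ℂ] Y) = LinearMap.ker A ∧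
      LinearMap.range (Pr : Y →ₗ[ℂ] Y) = (LinearMap.range A).topologicalClosure ∧
      ∀ u : Y, Tendsto (fun t : ℝ => ((t : ℂ) ^ 2) • A (A (P t u))) atTop (𝓝 (Pr u)) := by
  set N := (LinearMap.range A).topologicalClosure
  have hPR := eq_resolvent_comp_resolvent_neg hRA hAP
  have hP := norm_le_mul_self_of_eq_resolvent_comp hPR hRbdd
  have hAP0 : ∀ x, Tendsto (fun t : ℝ ↦ A (P t x)) atTop (𝓝 0) := fun x ↦ by
    simpa only [hPR, ContinuousLinearMap.comp_apply] using
      tendsto_map_resolvent_comp_atTop_zero hRA hRbdd x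
  have hPN : ∀ v ∈ N, Tendsto (fun t : ℝ ↦ P t v) atTop (𝓝 0) := fun v ↦
    tendsto_atTop_zero_of_mem_closure_range hPA hAP hP hAP0
  have hcompl : IsCompl (LinearMap.ker A) N := isCompl_ker_closure_range hAP hPN
    (exists_mem_ker_sub_mem_closure_range hrefl hRA hAR hPA hP hAP0)
  have hlim : ∀ u, Tendsto (fun t : ℝ ↦ ((t : ℂ) ^ 2) • A (A (P t u))) atTop
      (𝓝 (N.projection (LinearMap.ker A) hcompl.symm u)) := fun u ↦ by
    simpa only [← eq_sub_of_add_eq' (hPA _ u)] using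
      tendsto_sub_apply_projection hAP hPN hcompl.symm u
  have hbound : ∀ u, ‖N.projection (LinearMap.ker A) hcompl.symm u‖ ≤ (1 + C * C) * ‖u‖ :=
    fun u ↦ le_of_tendsto (tendsto_sub_apply_projection hAP hPN hcompl.symm u).norm <|
      Eventually.of_forall fun t ↦ (norm_sub_le _ _).trans <| by
        linarith [(P t).le_of_opNorm_le (hP t) u]
  refine ⟨hcompl, (N.projection (LinearMap.ker A) hcompl.symm).mkContinuous _ hbound,
    fun x ↦ Submodule.projection_apply_of_mem_left _ (Submodule.projection_apply_mem _ x),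
    Submodule.ker_projection _, Submodule.range_projection _, hlim⟩

/-- Abstract Hodge decomposition: if `Y` is a reflexive Banach space and `A` a bisectorial
operator in `Y`, then `Y = ker(A) ⊕ closure(range(A))` topologically, and the projection
onto `closure(range A)` along `ker A` is `P u = lim_{t→∞} t²A²(I + t²A²)⁻¹ u`. -/
theorem abstract_hodge_decomposition
    {Y : Type*} [NormedAddCommGroup Y] [NormedSpace ℂ Y] [CompleteSpace Y]
    -- reflexivity
    (hrefl : Function.Surjective (NormedSpace.inclusionInDoubleDual ℂ Y))
    (A : Y →ₗ[ℂ] Y)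
    -- bisectoriality: uniformly bounded resolvents on the imaginary axis
    (R : ℝ → (Y →L[ℂ] Y)) (C : ℝ) (hRbdd : ∀ t : ℝ, ‖R t‖ ≤ C)
    (hRA : ∀ (t : ℝ) (x : Y), R t x + (Complex.I * (t : ℂ)) • A (R t x) = x)
    (hAR : ∀ (t : ℝ) (x : Y), R t (x + (Complex.I * (t : ℂ)) • A x) = x)
    (P : ℝ → (Y →L[ℂ] Y))
    (hPA : ∀ (t : ℝ) (x : Y), P t x + ((t : ℂ) ^ 2) • A (A (P t x)) = x)
    (hAP : ∀ (t : ℝ) (x : Y), P t (x + ((t : ℂ) ^ 2) • A (A x)) = x) :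
    IsCompl (LinearMap.ker A) ((LinearMap.range A).topologicalClosure) ∧
    ∃ Pr : Y →L[ℂ] Y,
      (∀ x, Pr (Pr x) = Pr x) ∧
      LinearMap.ker (Pr : Y →ₗ[ℂ] Y) = LinearMap.ker A ∧
      LinearMap.range (Pr : Y →ₗ[ℂ] Y) = (LinearMap.range A).topologicalClosure ∧
      ∀ u : Y, Tendsto (fun t : ℝ => ((t : ℂ) ^ 2) • A (A (P t u))) atTop (𝓝 (Pr u)) :=
  abstract_hodge_decomposition_general hrefl A R C hRbdd hRA hAR P hPA hAP
end

section
/- (L^p averaging estimate for first-order operators) Let Γ = Γ₀∇ be a first-order homogeneous partial differential operator with constant coefficients on ℝⁿ, 1 < p < ∞, Q a cube of side length ℓ(Q), and u a function with u and Γu in L^p on a neighborhood of Q. Then |⨍_Q Γu dx|^p ≲ ℓ(Q)^{1−p} (⨍_Q |u|^p dx)^{1/p'} (⨍_Q |Γu|^p dx)^{1/p}, where ⨍_Q denotes the average over Q and 1/p + 1/p' = 1. -/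
open MeasureTheory

noncomputable section

/-- A first-order homogeneous constant-coefficient differential operator
`Γ = Γ₀∇ = ∑ᵢ cᵢ ∂ᵢ` acting on `ℂ^M`-valued functions, with values in `ℂ^N`. -/
def firstOrderOp (n M N : ℕ) (c : Fin n → Matrix (Fin N) (Fin M) ℂ)
    (u : (Fin n → ℝ) → (Fin M → ℂ)) (x : Fin n → ℝ) : Fin N → ℂ :=
  ∑ i, (c i).mulVec (fderiv ℝ u x (Pi.single i (1 : ℝ)))

/-!
Let `χ` be a smooth cutoff that vanishes outside `Q`, equals `1` away from a boundary layer
`S` of width `δ`, and has gradient `O(1/δ)`. Integrating by parts,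
`∫_Q Γu = -∑ᵢ cᵢ ∫_Q ∂ᵢχ u + ∫_Q (1 - χ) Γu`, and both integrands live on `S`, whose measure is
`O(δ/ℓ(Q)) |Q|`. Hölder's inequality on `S` then gives, in averaged norms,
`|⨍_Q Γu| ≲ (δ/ℓ(Q))^{1/p'} (δ⁻¹ ‖u‖_p + ‖Γu‖_p)`. The choice `δ = ‖u‖_p / ‖Γu‖_p` (or
`δ → ∞` if `‖Γu‖_p = 0`, and `δ → 0` if `‖u‖_p = 0`) and raising to the power `p` give the
estimate.
-/

open Set Filter Topology Real
open scoped ENNReal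

theorem exists_abs_deriv_smoothTransition_le :
    ∃ K, ∀ t, |deriv smoothTransition t| ≤ K := by
  have hcont : Continuous (deriv smoothTransition) :=
    smoothTransition.contDiff.continuous_deriv (n := 1) le_rfl
  refine hcont.bounded_above_of_compact_support
    (HasCompactSupport.intro (isCompact_Icc (a := 0) (b := 1)) fun t ht ↦ ?_)
  rcases not_and_or.mp ht with ht | ht <;> push Not at ht
  · have : smoothTransition =ᶠ[𝓝 t] fun _ ↦ 0 := by
      filter_upwards [Iio_mem_nhds ht] with s hs using smoothTransition.zero_of_nonpos hs.le
    rw [this.deriv_eq, deriv_const]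
  · have : smoothTransition =ᶠ[𝓝 t] fun _ ↦ 1 := by
      filter_upwards [Ioi_mem_nhds ht] with s hs using smoothTransition.one_of_one_le hs.le
    rw [this.deriv_eq, deriv_const]

def intervalCutoff (δ α β t : ℝ) : ℝ :=
  smoothTransition ((t - α) / δ) * smoothTransition ((β - t) / δ)

namespace intervalCutoff

variable {δ α β t : ℝ}

theorem nonneg : 0 ≤ intervalCutoff δ α β t :=
  mul_nonneg (smoothTransition.nonneg _) (smoothTransition.nonneg _)

theorem le_one : intervalCutoff δ α β t ≤ 1 :=
  mul_le_one₀ (smoothTransition.le_one _) (smoothTransition.nonneg _)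
    (smoothTransition.le_one _)

theorem abs_le_one : |intervalCutoff δ α β t| ≤ 1 :=
  abs_le.mpr ⟨by linarith [nonneg (δ := δ) (α := α) (β := β) (t := t)], le_one⟩

theorem eq_zero_of_notMem_Ioo (hδ : 0 ≤ δ) (ht : t ∉ Ioo α β) : intervalCutoff δ α β t = 0 := by
  rcases not_and_or.mp ht with ht | ht <;> push Not at ht
  · rw [intervalCutoff, smoothTransition.zero_of_nonpos
      (div_nonpos_of_nonpos_of_nonneg (by linarith) hδ), zero_mul]
  · rw [intervalCutoff, smoothTransition.zero_of_nonpos (x := (β - t) / δ)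
      (div_nonpos_of_nonpos_of_nonneg (by linarith) hδ), mul_zero]

theorem eq_one (hδ : 0 < δ) (ht : t ∈ Icc (α + δ) (β - δ)) : intervalCutoff δ α β t = 1 := by
  rw [intervalCutoff, smoothTransition.one_of_one_le, smoothTransition.one_of_one_le,
    mul_one] <;> rw [le_div_iff₀ hδ] <;> linarith [ht.1, ht.2]

theorem contDiff {n : ℕ∞} : ContDiff ℝ n (intervalCutoff δ α β) :=
  (smoothTransition.contDiff.comp ((contDiff_id.sub contDiff_const).div_const δ)).mul
    (smoothTransition.contDiff.comp ((contDiff_const.sub contDiff_id).div_const δ))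

theorem abs_deriv_le {K : ℝ} (hK : ∀ t, |deriv smoothTransition t| ≤ K) (hδ : 0 < δ) :
    |deriv (intervalCutoff δ α β) t| ≤ 2 * K / δ := by
  have hK0 : 0 ≤ K := (abs_nonneg _).trans (hK 0)
  have hdiff (s : ℝ) : HasDerivAt smoothTransition (deriv smoothTransition s) s :=
    (smoothTransition.contDiff.differentiable (n := 1) one_ne_zero s).hasDerivAt
  have hleft : HasDerivAt (fun t ↦ (t - α) / δ) (1 / δ) t :=
    ((hasDerivAt_id t).sub_const α).div_const δ
  have hright : HasDerivAt (fun t ↦ (β - t) / δ) (-1 / δ) t :=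
    ((hasDerivAt_id t).const_sub β).div_const δ
  have hderiv : HasDerivAt (intervalCutoff δ α β) _ t :=
    ((hdiff _).comp t hleft).mul ((hdiff _).comp t hright)
  rw [hderiv.deriv]
  have hψ₁ := smoothTransition.le_one ((t - α) / δ)
  have hψ₂ := smoothTransition.le_one ((β - t) / δ)
  have hψ'₁ := hK ((t - α) / δ)
  have hψ'₂ := hK ((β - t) / δ)
  calc _ ≤ |deriv smoothTransition ((t - α) / δ)| * (1 / δ) * smoothTransition ((β - t) / δ)
        + smoothTransition ((t - α) / δ) * (|deriv smoothTransition ((β - t) / δ)| * (1 / δ)) := by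
        refine (abs_add_le _ _).trans_eq ?_
        simp only [Function.comp, abs_mul, neg_div, abs_neg, abs_of_pos (one_div_pos.mpr hδ),
          abs_of_nonneg (smoothTransition.nonneg _)]
    _ ≤ K * (1 / δ) * 1 + 1 * (K * (1 / δ)) := by
        gcongr
        exact smoothTransition.nonneg _
    _ = 2 * K / δ := by ring

end intervalCutoff

theorem norm_fderiv_prod_apply_le {ι : Type*} [Fintype ι] {f : ι → ℝ → ℝ} {C : ℝ}
    (hf : ∀ i, Differentiable ℝ (f i)) (hf1 : ∀ i t, |f i t| ≤ 1)
    (hC : ∀ i t, |deriv (f i) t| ≤ C) (x : ι → ℝ) :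
    ‖fderiv ℝ (fun y ↦ ∏ i, f i (y i)) x‖ ≤ Fintype.card ι * C := by
  classical
  have hderiv : HasFDerivAt (fun y ↦ ∏ i, f i (y i)) _ x :=
    HasFDerivAt.finsetProd fun i _ ↦
      (hf i (x i)).hasDerivAt.comp_hasFDerivAt x (hasFDerivAt_apply (𝕜 := ℝ) (F' := fun _ ↦ ℝ) i x)
  rw [hderiv.fderiv]
  refine (norm_sum_le _ _).trans ?_
  rw [← nsmul_eq_mul, ← Finset.card_univ, ← Finset.sum_const]
  refine Finset.sum_le_sum fun i _ ↦ ?_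
  have hprod : ‖∏ j ∈ Finset.univ.erase i, f j (x j)‖ ≤ 1 := by
    rw [norm_prod]
    exact Finset.prod_le_one (fun _ _ ↦ norm_nonneg _) fun j _ ↦ hf1 j (x j)
  have hproj : ‖ContinuousLinearMap.proj (R := ℝ) (φ := fun _ : ι ↦ ℝ) i‖ ≤ 1 :=
    ContinuousLinearMap.opNorm_le_bound _ zero_le_one fun y ↦ by simpa using norm_le_pi_norm y i
  rw [norm_smul, norm_smul]
  calc _ ≤ 1 * (C * 1) := by
        gcongr
        · exact (abs_nonneg _).trans (hC i 0)
        · exact hC i (x i)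
    _ = C := by ring

section Cube

variable {ι : Type*}

def cube (a : ι → ℝ) (L : ℝ) : Set (ι → ℝ) := univ.pi fun i ↦ Icc (a i) (a i + L)

def innerCube (a : ι → ℝ) (L δ : ℝ) : Set (ι → ℝ) := univ.pi fun i ↦ Ioo (a i + δ) (a i + L - δ)

theorem isCompact_cube (a : ι → ℝ) (L : ℝ) : IsCompact (cube a L) := by
  rw [cube, pi_univ_Icc]; exact isCompact_Icc

variable [Fintype ι]

def cubeCutoff (δ : ℝ) (a : ι → ℝ) (L : ℝ) (x : ι → ℝ) : ℝ :=
  ∏ i, intervalCutoff δ (a i) (a i + L) (x i)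

namespace cubeCutoff

variable {δ L : ℝ} {a x : ι → ℝ}

theorem nonneg : 0 ≤ cubeCutoff δ a L x :=
  Finset.prod_nonneg fun _ _ ↦ intervalCutoff.nonneg

theorem le_one : cubeCutoff δ a L x ≤ 1 :=
  Finset.prod_le_one (fun _ _ ↦ intervalCutoff.nonneg) fun _ _ ↦ intervalCutoff.le_one

theorem eq_zero_of_notMem (hδ : 0 ≤ δ) (hx : x ∉ cube a L) : cubeCutoff δ a L x = 0 := by
  obtain ⟨i, -, hi⟩ := not_forall₂.mp hx
  exact Finset.prod_eq_zero (Finset.mem_univ i)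
    (intervalCutoff.eq_zero_of_notMem_Ioo hδ fun h ↦ hi (Ioo_subset_Icc_self h))

theorem eq_one (hδ : 0 < δ) (hx : x ∈ innerCube a L δ) : cubeCutoff δ a L x = 1 :=
  Finset.prod_eq_one fun i _ ↦ intervalCutoff.eq_one hδ (Ioo_subset_Icc_self (hx i trivial))

theorem contDiff {n : ℕ∞} : ContDiff ℝ n (cubeCutoff δ a L) :=
  contDiff_prod fun i _ ↦ intervalCutoff.contDiff.comp (contDiff_apply ℝ ℝ i)

theorem norm_fderiv_le {K : ℝ} (hK : ∀ t, |deriv smoothTransition t| ≤ K) (hδ : 0 < δ)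
    (x : ι → ℝ) : ‖fderiv ℝ (cubeCutoff δ a L) x‖ ≤ Fintype.card ι * (2 * K / δ) :=
  norm_fderiv_prod_apply_le (fun _ ↦ intervalCutoff.contDiff.differentiable (n := 1) one_ne_zero)
    (fun _ _ ↦ intervalCutoff.abs_le_one)
    (fun _ _ ↦ intervalCutoff.abs_deriv_le hK hδ) x

theorem fderiv_eq_zero (hδ : 0 < δ) (hx : x ∈ innerCube a L δ) :
    fderiv ℝ (cubeCutoff δ a L) x = 0 := by
  have hopen : IsOpen (innerCube a L δ) := isOpen_set_pi finite_univ fun _ _ ↦ isOpen_Ioo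
  have : cubeCutoff δ a L =ᶠ[𝓝 x] fun _ ↦ 1 :=
    eventually_of_mem (hopen.mem_nhds hx) fun y hy ↦ eq_one hδ hy
  rw [this.fderiv_eq, fderiv_const_apply]

end cubeCutoff

theorem measureReal_cube (a : ι → ℝ) {L : ℝ} (hL : 0 ≤ L) :
    volume.real (cube a L) = L ^ Fintype.card ι := by
  simp [cube, measureReal_def, Real.volume_Icc_pi, hL]

theorem measureReal_innerCube (a : ι → ℝ) (L δ : ℝ) :
    volume.real (innerCube a L δ) = max (L - 2 * δ) 0 ^ Fintype.card ι := by
  have (i : ι) : a i + L - δ - (a i + δ) = L - 2 * δ := by ring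
  simp [innerCube, measureReal_def, Real.volume_pi_Ioo, ENNReal.toReal_ofReal', this]

theorem measureReal_cube_diff_innerCube_le (a : ι → ℝ) {L δ : ℝ} (hL : 0 < L) (hδ : 0 ≤ δ) :
    volume.real (cube a L \ innerCube a L δ) ≤
      2 * Fintype.card ι * δ / L * volume.real (cube a L) := by
  have hsub : innerCube a L δ ⊆ cube a L := pi_mono fun i _ ↦
    Ioo_subset_Icc_self.trans (Icc_subset_Icc (by linarith) (by linarith))
  rw [measureReal_sdiff hsub (MeasurableSet.univ_pi fun _ ↦ measurableSet_Ioo)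
      (isCompact_cube a L).measure_ne_top,
    measureReal_cube a hL.le, measureReal_innerCube]
  set m := max (L - 2 * δ) 0
  have hm : 0 ≤ m := le_max_right _ _
  have hmL : m ≤ L := max_le (by linarith) hL.le
  calc L ^ Fintype.card ι - m ^ Fintype.card ι
      ≤ (L - m) * Fintype.card ι * L ^ (Fintype.card ι - 1) := by
        simpa [abs_of_nonneg hL.le, abs_of_nonneg hm, abs_of_nonneg (sub_nonneg.2 hmL), hmL]
          using le_abs_self _ |>.trans (abs_pow_sub_pow_le L m (Fintype.card ι))
    _ ≤ 2 * δ * Fintype.card ι * L ^ (Fintype.card ι - 1) := by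
        gcongr
        linarith [le_max_left (L - 2 * δ) 0]
    _ = 2 * Fintype.card ι * δ / L * L ^ Fintype.card ι := by
        rcases Nat.eq_zero_or_pos (Fintype.card ι) with h | h
        · simp [h]
        · rw [← Nat.sub_add_cancel h, pow_succ]
          field_simp
          simp

end Cube

theorem setIntegral_smul_fderiv_eq_neg {E F : Type*} [NormedAddCommGroup E] [NormedSpace ℝ E]
    [FiniteDimensional ℝ E] [MeasurableSpace E] [BorelSpace E] {μ : Measure E} [μ.IsAddHaarMeasure]
    [NormedAddCommGroup F] [NormedSpace ℝ F] {K U : Set E} (hK : IsCompact K) (hU : IsOpen U)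
    (hKU : K ⊆ U) {χ : E → ℝ} (hχ : ContDiff ℝ 1 χ) (hχK : ∀ x ∉ K, χ x = 0) {u : E → F}
    (hu : ContDiffOn ℝ 1 u U) (v : E) :
    ∫ x in K, χ x • fderiv ℝ u x v ∂μ = -∫ x in K, fderiv ℝ χ x v • u x ∂μ := by
  have hχ' (x : E) (hx : x ∉ K) : fderiv ℝ χ x = 0 := by
    have : χ =ᶠ[𝓝 x] fun _ ↦ 0 := eventually_of_mem (hK.isClosed.isOpen_compl.mem_nhds hx) hχK
    rw [this.fderiv_eq, fderiv_const_apply]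
  have hχ'cont : Continuous fun x ↦ fderiv ℝ χ x v :=
    (hχ.continuous_fderiv one_ne_zero).clm_apply continuous_const
  have hucont : ContinuousOn u K := hu.continuousOn.mono hKU
  have hu'cont : ContinuousOn (fun x ↦ fderiv ℝ u x v) K :=
    ((hu.continuousOn_fderiv_of_isOpen hU le_rfl).mono hKU).clm_apply continuousOn_const
  have hintegrable {f : E → F} (hf : ContinuousOn f K) (hf0 : ∀ x ∉ K, f x = 0) :
      Integrable f μ :=
    (hf.integrableOn_compact hK).integrable_of_forall_notMem_eq_zero hf0
  have H := integral_bilinear_hasLineDerivAt_right_eq_neg_left_of_integrable (μ := μ)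
    (B := ContinuousLinearMap.lsmul ℝ ℝ) (f := χ) (g := u) (v := v)
    (hintegrable (hχ'cont.continuousOn.smul hucont) fun x hx ↦ by simp [hχ' x hx])
    (hintegrable (hχ.continuous.continuousOn.smul hu'cont) fun x hx ↦ by simp [hχK x hx])
    (hintegrable (hχ.continuous.continuousOn.smul hucont) fun x hx ↦ by simp [hχK x hx])
    (fun x _ ↦ ((hχ.differentiable one_ne_zero) x).hasFDerivAt.hasLineDerivAt v)
    fun x hx ↦ by
      have hxU : x ∈ U := hKU (closure_minimal (Function.support_subset_iff'.mpr hχK)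
        hK.isClosed hx)
      exact ((hu.differentiableOn one_ne_zero x hxU).differentiableAt
        (hU.mem_nhds hxU)).hasFDerivAt.hasLineDerivAt v
  simp only [ContinuousLinearMap.lsmul_apply] at H
  rw [setIntegral_eq_integral_of_forall_compl_eq_zero fun x hx ↦ by simp [hχK x hx],
    setIntegral_eq_integral_of_forall_compl_eq_zero fun x hx ↦ by simp [hχ' x hx], H]

theorem ContinuousOn.memLp_restrict_of_isCompact {X E : Type*} [TopologicalSpace X] [T2Space X]
    [MeasurableSpace X] [OpensMeasurableSpace X] {μ : Measure X} [IsFiniteMeasureOnCompacts μ]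
    [NormedAddCommGroup E] {K : Set X} {f : X → E} (hf : ContinuousOn f K) (hK : IsCompact K)
    (p : ℝ≥0∞) : MemLp f p (μ.restrict K) := by
  obtain ⟨C, hC⟩ := hK.exists_bound_of_continuousOn hf
  have : IsFiniteMeasure (μ.restrict K) := isFiniteMeasure_restrict.mpr hK.measure_ne_top
  exact (memLp_top_of_bound (hf.aestronglyMeasurable_of_isCompact hK hK.measurableSet) C
    (ae_restrict_of_forall_mem hK.measurableSet hC)).mono_exponent le_top

section Holder

variable {α E : Type*} [MeasurableSpace α] {μ : Measure α} [NormedAddCommGroup E] {S Q : Set α}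

theorem norm_setIntegral_smul_le [NormedSpace ℝ E] (hS : MeasurableSet S) (hQ : MeasurableSet Q)
    (hSQ : S ⊆ Q) {w : α → ℝ} {f : α → E} {c : ℝ} (hf : IntegrableOn f S μ)
    (hw : ∀ x ∈ S, |w x| ≤ c) (hw0 : ∀ x ∈ Q \ S, w x = 0) :
    ‖∫ x in Q, w x • f x ∂μ‖ ≤ c * ∫ x in S, ‖f x‖ ∂μ := by
  rw [setIntegral_eq_of_subset_of_forall_sdiff_eq_zero hQ hSQ fun x hx ↦ by simp [hw0 x hx],
    ← integral_const_mul]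
  refine norm_integral_le_of_norm_le (hf.norm.const_mul c) (ae_restrict_of_forall_mem hS ?_)
  intro x hx
  rw [norm_smul, Real.norm_eq_abs]
  exact mul_le_mul_of_nonneg_right (hw x hx) (norm_nonneg _)

theorem setAverage_norm_le_of_measureReal_le {p q θ : ℝ} (hpq : p.HolderConjugate q)
    (hSQ : S ⊆ Q) (hQ : μ Q ≠ ∞) (hθ : 0 ≤ θ)
    (hSθ : μ.real S ≤ θ * μ.real Q) {f : α → E} (hf : MemLp f (ENNReal.ofReal p) (μ.restrict Q)) :
    (μ.real Q)⁻¹ * ∫ x in S, ‖f x‖ ∂μ ≤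
      θ ^ (1 / q) * ((μ.real Q)⁻¹ * ∫ x in Q, ‖f x‖ ^ p ∂μ) ^ (1 / p) := by
  have hI : 0 ≤ ∫ x in Q, ‖f x‖ ^ p ∂μ := integral_nonneg fun _ ↦ by positivity
  rcases (measureReal_nonneg : 0 ≤ μ.real Q).eq_or_lt with hV | hV
  · rw [← hV, inv_zero, zero_mul]; positivity
  have hSfin : μ S ≠ ∞ := ne_top_of_le_ne_top hQ (measure_mono hSQ)
  have : IsFiniteMeasure (μ.restrict S) := isFiniteMeasure_restrict.mpr hSfin
  have holder := integral_mul_le_Lp_mul_Lq_of_nonneg hpq (ae_of_all _ fun _ ↦ norm_nonneg _)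
    (ae_of_all _ fun _ ↦ zero_le_one) (hf.mono_measure (Measure.restrict_mono hSQ le_rfl)).norm
    (memLp_const (1 : ℝ))
  simp only [mul_one, one_rpow, integral_const, smul_eq_mul,
    measureReal_restrict_apply_univ] at holder
  have hmono : ∫ x in S, ‖f x‖ ^ p ∂μ ≤ ∫ x in Q, ‖f x‖ ^ p ∂μ :=
    setIntegral_mono_set (by simpa [IntegrableOn, hpq.nonneg] using
      hf.integrable_norm_rpow (by simpa using hpq.pos) (by simp))
      (ae_of_all _ fun _ ↦ by positivity) hSQ.eventuallyLE
  have hV' : μ.real Q ^ (1 / q) = μ.real Q * (μ.real Q ^ (1 / p))⁻¹ := by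
    rw [show 1 / q = 1 - 1 / p by rw [one_div, one_div, ← hpq.inv_add_inv_eq_one]; ring,
      rpow_sub hV, rpow_one, div_eq_mul_inv]
  calc (μ.real Q)⁻¹ * ∫ x in S, ‖f x‖ ∂μ
      ≤ (μ.real Q)⁻¹ * ((∫ x in Q, ‖f x‖ ^ p ∂μ) ^ (1 / p) * (θ * μ.real Q) ^ (1 / q)) := by
        have hp : 0 ≤ 1 / p := one_div_nonneg.mpr hpq.nonneg
        have hq : 0 ≤ 1 / q := one_div_nonneg.mpr hpq.symm.nonneg
        gcongr
        exact holder.trans (by gcongr)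
    _ = θ ^ (1 / q) * ((μ.real Q)⁻¹ * ∫ x in Q, ‖f x‖ ^ p ∂μ) ^ (1 / p) := by
        rw [mul_rpow hθ hV.le, mul_rpow (by positivity) hI, inv_rpow hV.le, hV']
        field_simp

end Holder

theorem setAverage_norm_cube_diff_innerCube_le {ι E : Type*} [Fintype ι] [NormedAddCommGroup E]
    {p q : ℝ} (hpq : p.HolderConjugate q) (a : ι → ℝ) {L δ : ℝ} (hL : 0 < L) (hδ : 0 ≤ δ)
    {f : (ι → ℝ) → E} (hf : ContinuousOn f (cube a L)) :
    (volume.real (cube a L))⁻¹ * ∫ x in cube a L \ innerCube a L δ, ‖f x‖ ≤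
      (2 * Fintype.card ι / L * δ) ^ (1 / q) *
        ((volume.real (cube a L))⁻¹ * ∫ x in cube a L, ‖f x‖ ^ p) ^ (1 / p) := by
  refine setAverage_norm_le_of_measureReal_le hpq sdiff_subset (isCompact_cube a L).measure_ne_top
    (by positivity) ?_ (hf.memLp_restrict_of_isCompact (isCompact_cube a L) _)
  convert measureReal_cube_diff_innerCube_le a hL hδ using 1
  ring

theorem le_rpow_mul_rpow_of_forall_pos_le {X θ K A B s t : ℝ} (hs : 0 < s) (ht : 0 < t)
    (hst : s + t = 1) (hθ : 0 ≤ θ) (hK : 0 ≤ K) (hA : 0 ≤ A) (hB : 0 ≤ B)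
    (h : ∀ δ > 0, X ≤ (θ * δ) ^ s * (K * A / δ + B)) :
    X ≤ θ ^ s * (K + 1) * A ^ s * B ^ t := by
  rcases hB.eq_or_lt with rfl | hB
  · -- let `δ → ∞`
    rw [zero_rpow ht.ne', mul_zero]
    refine ge_of_tendsto (by simpa using (tendsto_rpow_neg_atTop ht).const_mul (θ ^ s * K * A))
      (eventually_gt_atTop 0 |>.mono fun δ hδ ↦ (h δ hδ).trans_eq ?_)
    rw [add_zero, mul_rpow hθ hδ.le, show -t = s - 1 by linarith, rpow_sub_one hδ.ne']
    ring
  rcases hA.eq_or_lt with rfl | hA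
  · -- let `δ → 0⁺`
    rw [zero_rpow hs.ne', mul_zero, zero_mul]
    have hcont : Continuous fun δ : ℝ ↦ (θ * δ) ^ s * B :=
      ((continuous_const.mul continuous_id).rpow_const fun _ ↦ Or.inr hs.le).mul continuous_const
    have hlim : Tendsto (fun δ : ℝ ↦ (θ * δ) ^ s * B) (𝓝[>] 0) (𝓝 0) := by
      simpa [zero_rpow hs.ne'] using (hcont.tendsto 0).mono_left nhdsWithin_le_nhds
    refine ge_of_tendsto hlim (eventually_mem_nhdsWithin.mono fun δ hδ ↦ (h δ hδ).trans_eq ?_)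
    simp
  calc X ≤ (θ * (A / B)) ^ s * (K * A / (A / B) + B) := h _ (div_pos hA hB)
    _ = θ ^ s * (K + 1) * A ^ s * (B / B ^ s) := by
        rw [mul_rpow hθ (div_pos hA hB).le, div_rpow hA.le hB.le]
        field_simp
    _ = θ ^ s * (K + 1) * A ^ s * B ^ t := by
        rw [show t = 1 - s by linarith, rpow_sub hB, rpow_one]

theorem rpow_mul_rpow_holderConjugate_eq {p q θ K α β : ℝ} (hpq : p.HolderConjugate q)
    (hθ : 0 ≤ θ) (hK : 0 ≤ K) (hα : 0 ≤ α) (hβ : 0 ≤ β) :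
    (θ ^ (1 / q) * K * (α ^ (1 / p)) ^ (1 / q) * (β ^ (1 / p)) ^ (1 / p)) ^ p =
      θ ^ (p - 1) * K ^ p * α ^ (1 / q) * β ^ (1 / p) := by
  have hp : p ≠ 0 := hpq.pos.ne'
  have hq : 1 / q = 1 - 1 / p := by rw [one_div, one_div, ← hpq.inv_add_inv_eq_one]; ring
  rw [mul_rpow (by positivity) (by positivity), mul_rpow (by positivity) (by positivity),
    mul_rpow (by positivity) (by positivity), ← rpow_mul hθ, ← rpow_mul (by positivity),
    ← rpow_mul hα, ← rpow_mul (by positivity), ← rpow_mul hβ, hq,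
    show (1 - 1 / p) * p = p - 1 by field_simp, show 1 / p * (p - 1) = 1 - 1 / p by field_simp,
    show 1 / p * (1 / p * p) = 1 / p by field_simp]

section ConstCoeffOp

variable {ι F G : Type*} [Fintype ι] [DecidableEq ι] [NormedAddCommGroup F] [NormedSpace ℝ F]
  [NormedAddCommGroup G] [NormedSpace ℝ G]

def constCoeffOp (A : ι → F →L[ℝ] G) (u : (ι → ℝ) → F) (x : ι → ℝ) : G :=
  ∑ i, A i (fderiv ℝ u x (Pi.single i 1))

variable {A : ι → F →L[ℝ] G} {u : (ι → ℝ) → F} {U : Set (ι → ℝ)}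

theorem ContDiffOn.continuousOn_constCoeffOp (hu : ContDiffOn ℝ 1 u U) (hU : IsOpen U) :
    ContinuousOn (constCoeffOp A u) U :=
  continuousOn_finsetSum _ fun i _ ↦ (A i).continuous.comp_continuousOn
    ((hu.continuousOn_fderiv_of_isOpen hU le_rfl).clm_apply continuousOn_const)

theorem setIntegral_constCoeffOp_eq [CompleteSpace F] [CompleteSpace G]
    {μ : Measure (ι → ℝ)} [μ.IsAddHaarMeasure] {K : Set (ι → ℝ)} (hK : IsCompact K)
    (hU : IsOpen U) (hKU : K ⊆ U) {χ : (ι → ℝ) → ℝ} (hχ : ContDiff ℝ 1 χ)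
    (hχK : ∀ x ∉ K, χ x = 0) (hu : ContDiffOn ℝ 1 u U) :
    ∫ x in K, constCoeffOp A u x ∂μ =
      -∑ i, A i (∫ x in K, fderiv ℝ χ x (Pi.single i 1) • u x ∂μ) +
        ∫ x in K, (1 - χ x) • constCoeffOp A u x ∂μ := by
  have hΓ := (hu.continuousOn_constCoeffOp (A := A) hU).mono hKU
  have hint (i : ι) : IntegrableOn (fun x ↦ χ x • fderiv ℝ u x (Pi.single i 1)) K μ :=
    (hχ.continuous.continuousOn.smul (((hu.continuousOn_fderiv_of_isOpen hU le_rfl).mono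
      hKU).clm_apply continuousOn_const)).integrableOn_compact hK
  have hχΓ : ∫ x in K, χ x • constCoeffOp A u x ∂μ =
      ∑ i, A i (∫ x in K, χ x • fderiv ℝ u x (Pi.single i 1) ∂μ) := by
    simp only [constCoeffOp, Finset.smul_sum, ← map_smul (A _)]
    rw [integral_finsetSum _ fun i _ ↦ (A i).integrable_comp (hint i)]
    exact Finset.sum_congr rfl fun i _ ↦ (A i).integral_comp_comm (hint i)
  calc ∫ x in K, constCoeffOp A u x ∂μ
      = ∫ x in K, χ x • constCoeffOp A u x ∂μ + ∫ x in K, (1 - χ x) • constCoeffOp A u x ∂μ := by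
        have h1 : IntegrableOn (fun x ↦ χ x • constCoeffOp A u x) K μ :=
          (hχ.continuous.continuousOn.smul hΓ).integrableOn_compact hK
        have h2 : IntegrableOn (fun x ↦ (1 - χ x) • constCoeffOp A u x) K μ :=
          ((continuous_const.sub hχ.continuous).continuousOn.smul hΓ).integrableOn_compact hK
        rw [← integral_add h1 h2]
        simp_rw [← add_smul, add_sub_cancel, one_smul]
    _ = _ := by
        simp_rw [hχΓ, setIntegral_smul_fderiv_eq_neg hK hU hKU hχ hχK hu, map_neg,
          Finset.sum_neg_distrib]

theorem norm_setAverage_constCoeffOp_le [CompleteSpace F] [CompleteSpace G] {p q : ℝ}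
    (hpq : p.HolderConjugate q) {K : ℝ} (hK : ∀ t, |deriv smoothTransition t| ≤ K)
    (a : ι → ℝ) {L δ : ℝ} (hL : 0 < L) (hδ : 0 < δ) (hU : IsOpen U) (hQU : cube a L ⊆ U)
    (hu : ContDiffOn ℝ 1 u U) :
    ‖(volume.real (cube a L))⁻¹ • ∫ x in cube a L, constCoeffOp A u x‖ ≤
      (2 * Fintype.card ι / L * δ) ^ (1 / q) *
        ((∑ i, ‖A i‖) * (Fintype.card ι * (2 * K)) *
            ((volume.real (cube a L))⁻¹ * ∫ x in cube a L, ‖u x‖ ^ p) ^ (1 / p) / δ +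
          ((volume.real (cube a L))⁻¹ * ∫ x in cube a L, ‖constCoeffOp A u x‖ ^ p) ^ (1 / p)) := by
  set Q := cube a L
  set S := Q \ innerCube a L δ
  set χ := cubeCutoff δ a L
  have hK0 : 0 ≤ K := (abs_nonneg _).trans (hK 0)
  have hQ : IsCompact Q := isCompact_cube a L
  have hSQ : S ⊆ Q := sdiff_subset
  have hS : MeasurableSet S :=
    hQ.measurableSet.diff (MeasurableSet.univ_pi fun _ ↦ measurableSet_Ioo)
  have hucont : ContinuousOn u Q := hu.continuousOn.mono hQU
  have hΓcont : ContinuousOn (constCoeffOp A u) Q := (hu.continuousOn_constCoeffOp hU).mono hQU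
  have hmid {x : ι → ℝ} (hx : x ∈ Q \ S) : x ∈ innerCube a L δ := by
    by_contra h
    exact hx.2 ⟨hx.1, h⟩
  have hbound₁ (i : ι) : ‖∫ x in Q, fderiv ℝ χ x (Pi.single i 1) • u x‖ ≤
      Fintype.card ι * (2 * K / δ) * ∫ x in S, ‖u x‖ := by
    refine norm_setIntegral_smul_le hS hQ.measurableSet hSQ
      ((hucont.integrableOn_compact hQ).mono_set hSQ) (fun x _ ↦ ?_)
      fun x hx ↦ by simp [χ, cubeCutoff.fderiv_eq_zero hδ (hmid hx)]
    calc _ ≤ ‖fderiv ℝ χ x‖ * ‖(Pi.single i 1 : ι → ℝ)‖ := (fderiv ℝ χ x).le_opNorm _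
      _ ≤ Fintype.card ι * (2 * K / δ) * 1 := by
        rw [Pi.norm_single, norm_one]; gcongr; exact cubeCutoff.norm_fderiv_le hK hδ x
      _ = _ := mul_one _
  have hbound₂ : ‖∫ x in Q, (1 - χ x) • constCoeffOp A u x‖ ≤
      1 * ∫ x in S, ‖constCoeffOp A u x‖ := by
    refine norm_setIntegral_smul_le hS hQ.measurableSet hSQ
      ((hΓcont.integrableOn_compact hQ).mono_set hSQ) (fun x _ ↦ ?_)
      fun x hx ↦ by simp [χ, cubeCutoff.eq_one hδ (hmid hx)]
    rw [abs_le]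
    constructor <;> linarith [cubeCutoff.nonneg (δ := δ) (a := a) (L := L) (x := x),
      cubeCutoff.le_one (δ := δ) (a := a) (L := L) (x := x)]
  rw [norm_smul, norm_inv, Real.norm_of_nonneg measureReal_nonneg,
    setIntegral_constCoeffOp_eq hQ hU hQU cubeCutoff.contDiff
      (fun x hx ↦ cubeCutoff.eq_zero_of_notMem hδ.le hx) hu]
  calc _ ≤ (volume.real Q)⁻¹ * ((∑ i, ‖A i‖) * (Fintype.card ι * (2 * K / δ) *
          ∫ x in S, ‖u x‖) + 1 * ∫ x in S, ‖constCoeffOp A u x‖) := by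
        gcongr
        refine (norm_add_le _ _).trans (add_le_add ?_ hbound₂)
        rw [norm_neg, Finset.sum_mul]
        exact (norm_sum_le _ _).trans
          (Finset.sum_le_sum fun i _ ↦ (A i).le_opNorm_of_le (hbound₁ i))
    _ = (∑ i, ‖A i‖) * (Fintype.card ι * (2 * K / δ)) * ((volume.real Q)⁻¹ * ∫ x in S, ‖u x‖) +
          (volume.real Q)⁻¹ * ∫ x in S, ‖constCoeffOp A u x‖ := by ring
    _ ≤ (∑ i, ‖A i‖) * (Fintype.card ι * (2 * K / δ)) * ((2 * Fintype.card ι / L * δ) ^ (1 / q) *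
          ((volume.real Q)⁻¹ * ∫ x in Q, ‖u x‖ ^ p) ^ (1 / p)) +
          (2 * Fintype.card ι / L * δ) ^ (1 / q) *
            ((volume.real Q)⁻¹ * ∫ x in Q, ‖constCoeffOp A u x‖ ^ p) ^ (1 / p) :=
        add_le_add (mul_le_mul_of_nonneg_left
            (setAverage_norm_cube_diff_innerCube_le hpq a hL hδ.le hucont)
            (mul_nonneg (Finset.sum_nonneg fun _ _ ↦ norm_nonneg _)
              (mul_nonneg (Nat.cast_nonneg _) (div_nonneg (by linarith) hδ.le))))
          (setAverage_norm_cube_diff_innerCube_le hpq a hL hδ.le hΓcont)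
    _ = _ := by ring

theorem norm_setAverage_constCoeffOp_rpow_le [CompleteSpace F] [CompleteSpace G] {p q : ℝ}
    (hpq : p.HolderConjugate q) {K : ℝ} (hK : ∀ t, |deriv smoothTransition t| ≤ K)
    (a : ι → ℝ) {L : ℝ} (hL : 0 < L) (hU : IsOpen U) (hQU : cube a L ⊆ U)
    (hu : ContDiffOn ℝ 1 u U) :
    ‖(volume.real (cube a L))⁻¹ • ∫ x in cube a L, constCoeffOp A u x‖ ^ p ≤
      (2 * Fintype.card ι) ^ (p - 1) * ((∑ i, ‖A i‖) * (Fintype.card ι * (2 * K)) + 1) ^ p *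
        L ^ (1 - p) * ((volume.real (cube a L))⁻¹ * ∫ x in cube a L, ‖u x‖ ^ p) ^ (1 / q) *
        ((volume.real (cube a L))⁻¹ * ∫ x in cube a L, ‖constCoeffOp A u x‖ ^ p) ^ (1 / p) := by
  set α := (volume.real (cube a L))⁻¹ * ∫ x in cube a L, ‖u x‖ ^ p
  set β := (volume.real (cube a L))⁻¹ * ∫ x in cube a L, ‖constCoeffOp A u x‖ ^ p
  set K' := (∑ i, ‖A i‖) * (Fintype.card ι * (2 * K))
  have hK' : 0 ≤ K' := mul_nonneg (Finset.sum_nonneg fun _ _ ↦ norm_nonneg _)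
    (mul_nonneg (Nat.cast_nonneg _) (mul_nonneg zero_le_two ((abs_nonneg _).trans (hK 0))))
  have hα : 0 ≤ α := mul_nonneg (inv_nonneg.mpr measureReal_nonneg)
    (integral_nonneg fun _ ↦ by positivity)
  have hβ : 0 ≤ β := mul_nonneg (inv_nonneg.mpr measureReal_nonneg)
    (integral_nonneg fun _ ↦ by positivity)
  have hθ : 0 ≤ 2 * Fintype.card ι / L := by positivity
  have hopt := le_rpow_mul_rpow_of_forall_pos_le (one_div_pos.mpr hpq.symm.pos)
    (one_div_pos.mpr hpq.pos) (by rw [add_comm, one_div, one_div, hpq.inv_add_inv_eq_one]) hθ hK'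
    (rpow_nonneg hα _) (rpow_nonneg hβ _)
    fun δ hδ ↦ norm_setAverage_constCoeffOp_le hpq hK a hL hδ hU hQU hu
  calc _ ≤ ((2 * Fintype.card ι / L) ^ (1 / q) * (K' + 1) * (α ^ (1 / p)) ^ (1 / q) *
          (β ^ (1 / p)) ^ (1 / p)) ^ p := rpow_le_rpow (norm_nonneg _) hopt hpq.nonneg
    _ = (2 * Fintype.card ι / L) ^ (p - 1) * (K' + 1) ^ p * α ^ (1 / q) * β ^ (1 / p) :=
        rpow_mul_rpow_holderConjugate_eq hpq hθ (by positivity) hα hβ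
    _ = _ := by
        rw [div_rpow (by positivity) hL.le, show 1 - p = -(p - 1) by ring, rpow_neg hL.le]
        ring

theorem exists_norm_setAverage_constCoeffOp_rpow_le [CompleteSpace F] [CompleteSpace G]
    (A : ι → F →L[ℝ] G) {p q : ℝ} (hpq : p.HolderConjugate q) :
    ∃ C > 0, ∀ (a : ι → ℝ) (L : ℝ), 0 < L → ∀ U : Set (ι → ℝ), IsOpen U → cube a L ⊆ U →
      ∀ u : (ι → ℝ) → F, ContDiffOn ℝ 1 u U →
        ‖(volume.real (cube a L))⁻¹ • ∫ x in cube a L, constCoeffOp A u x‖ ^ p ≤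
          C * L ^ (1 - p) * ((volume.real (cube a L))⁻¹ * ∫ x in cube a L, ‖u x‖ ^ p) ^ (1 / q) *
            ((volume.real (cube a L))⁻¹ * ∫ x in cube a L, ‖constCoeffOp A u x‖ ^ p) ^ (1 / p) := by
  obtain ⟨K, hK⟩ := exists_abs_deriv_smoothTransition_le
  have hK' : 0 ≤ (∑ i, ‖A i‖) * (Fintype.card ι * (2 * K)) := mul_nonneg
    (Finset.sum_nonneg fun _ _ ↦ norm_nonneg _)
    (mul_nonneg (Nat.cast_nonneg _) (mul_nonneg zero_le_two ((abs_nonneg _).trans (hK 0))))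
  have hC₀ : 0 ≤ (2 * Fintype.card ι : ℝ) ^ (p - 1) *
      ((∑ i, ‖A i‖) * (Fintype.card ι * (2 * K)) + 1) ^ p := by positivity
  refine ⟨_, add_pos_of_nonneg_of_pos hC₀ one_pos, fun a L hL U hU hQU u hu ↦
    (norm_setAverage_constCoeffOp_rpow_le hpq hK a hL hU hQU hu).trans ?_⟩
  gcongr
  exact le_add_of_nonneg_right zero_le_one

end ConstCoeffOp

/-- `L^p` averaging estimate for first-order constant-coefficient operators:
`|⨍_Q Γu|^p ≲ ℓ(Q)^{1−p} (⨍_Q |u|^p)^{1/p'} (⨍_Q |Γu|^p)^{1/p}`, with constant depending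
only on `p`, `n` and `Γ₀`. -/
theorem lp_averaging_first_order (n M N : ℕ)
    (c : Fin n → Matrix (Fin N) (Fin M) ℂ)
    (p p' : ℝ) (hp : 1 < p) (hpq : 1 / p + 1 / p' = 1) :
    ∃ C : ℝ, 0 < C ∧
      ∀ (a : Fin n → ℝ) (L : ℝ), 0 < L →
      ∀ (U : Set (Fin n → ℝ)), IsOpen U →
        closure (Set.pi Set.univ (fun i => Set.Icc (a i) (a i + L))) ⊆ U →
      ∀ u : (Fin n → ℝ) → (Fin M → ℂ), ContDiffOn ℝ 1 u U →
        let Q := Set.pi Set.univ (fun i => Set.Icc (a i) (a i + L))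
        ‖((volume Q).toReal)⁻¹ • ∫ x in Q, firstOrderOp n M N c u x‖ ^ p
          ≤ C * L ^ (1 - p) *
            (((volume Q).toReal)⁻¹ * ∫ x in Q, ‖u x‖ ^ p) ^ (1 / p') *
            (((volume Q).toReal)⁻¹ * ∫ x in Q, ‖firstOrderOp n M N c u x‖ ^ p) ^ (1 / p) := by
  have hpq' : p.HolderConjugate p' :=
    Real.holderConjugate_iff.mpr ⟨hp, by simpa only [one_div] using hpq⟩
  obtain ⟨C, hC, hbound⟩ := exists_norm_setAverage_constCoeffOp_rpow_le
    (fun i ↦ ((c i).mulVecLin.restrictScalars ℝ).toContinuousLinearMap) hpq'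
  exact ⟨C, hC, fun a L hL U hU hQU u hu ↦ hbound a L hL U hU (subset_closure.trans hQU) u hu⟩
end
end
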